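/- arXiv:2603.20922 — 5 statements merged into one kernel-verified Lean document; each statement's English description precedes it below -/
import Mathlib

section
/- Let B be a ball of X and let B' be a nonempty ball with B' ⊊ B such that d(x,y) = diam(B) for every x ∈ B' and every y ∈ B \ B'. Define φ : X → ℝ by φ = 1_{B'}/m(B') − 1_B/m(B), and fix x₀ ∈ B'. Then φ ≠ 0 and the ultrametric Laplacian satisfies L φ = λ · φ, where λ = −(Σ_{y ∉ B} k(d(x₀,y))·m(y) + k(diam B)·m(B)). -/
open scoped Classical
open Finset

/-- Closed ball of radius `r` around `x`, as a finset. -/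
noncomputable def uball {X : Type*} [Fintype X] (d : X → X → ℝ) (x : X) (r : ℝ) : Finset X :=
  Finset.univ.filter fun y => d x y ≤ r

/-- A ball of the ultrametric space: a closed ball of nonnegative radius. -/
def IsBall {X : Type*} [Fintype X] (d : X → X → ℝ) (B : Finset X) : Prop :=
  ∃ x r, 0 ≤ r ∧ B = uball d x r

/-- Diameter of a finite set: maximum of `d` over `B × B` (`0` if `B` is empty). -/
noncomputable def fdiam {X : Type*} [Fintype X] (d : X → X → ℝ) (B : Finset X) : ℝ :=
  if h : (B ×ˢ B).Nonempty then (B ×ˢ B).sup' h fun p => d p.1 p.2 else 0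

/-- Mass of a set: `m(B) = Σ_{x ∈ B} m(x)`. -/
noncomputable def mass {X : Type*} [Fintype X] (m : X → ℝ) (B : Finset X) : ℝ :=
  ∑ x ∈ B, m x

/-- The eigenvalue attached to a ball `B`, computed from a base point `x₀ ∈ B`:
`λ(B) = −(Σ_{y ∉ B} k(d(x₀,y))·m(y) + k(diam B)·m(B))`. -/
noncomputable def lamB {X : Type*} [Fintype X] [DecidableEq X]
    (d : X → X → ℝ) (k : ℝ → ℝ) (m : X → ℝ) (B : Finset X) (x₀ : X) : ℝ :=
  -((∑ y ∈ Bᶜ, k (d x₀ y) * m y) + k (fdiam d B) * mass m B)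

/-- The parent radius of a ball `B ⊊ X` seen from `x ∈ B`: `r⁺ = min{d(x,y) : y ∉ B}`. -/
noncomputable def parentR {X : Type*} [Fintype X] [DecidableEq X]
    (d : X → X → ℝ) (B : Finset X) (x : X) : ℝ :=
  if h : (Bᶜ : Finset X).Nonempty then Bᶜ.inf' h fun y => d x y else 0

/-- The parent ball `B⁺ = B(x, r⁺)` of `B ⊊ X`, computed from a base point `x ∈ B`. -/
noncomputable def parentB {X : Type*} [Fintype X] [DecidableEq X]
    (d : X → X → ℝ) (B : Finset X) (x : X) : Finset X :=
  uball d x (parentR d B x)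

/-- The ultrametric Laplacian matrix:
`L x y = k(d(x,y))·m(y)` off the diagonal and `L x x = −Σ_{z ≠ x} k(d(x,z))·m(z)`. -/
noncomputable def ultraLap {X : Type*} [Fintype X] [DecidableEq X]
    (d : X → X → ℝ) (k : ℝ → ℝ) (m : X → ℝ) : Matrix X X ℝ :=
  fun x y => if y = x then -(∑ z ∈ ({x}ᶜ : Finset X), k (d x z) * m z) else k (d x y) * m y

/-- The smallest ball containing `x` and `y` and having at least two elements:
`B(x, d(x,y))` for `x ≠ y`, and `B(x, min_{z ≠ x} d(x,z))` for `x = y`. -/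
noncomputable def sball {X : Type*} [Fintype X] [DecidableEq X]
    (d : X → X → ℝ) (x y : X) : Finset X :=
  if x = y then
    (if h : (({x}ᶜ : Finset X)).Nonempty then
      uball d x ((({x}ᶜ : Finset X)).inf' h fun z => d x z)
     else uball d x 0)
  else uball d x (d x y)

/-! Proof idea: in an ultrametric space every point of a ball `B` is a centre of `B`, so `d(x, ·)`
is constant on `B` for `x ∉ B`, and `d(·, z)` is constant on `B` for `z ∉ B`. Hence a function `u`
supported on `B` with `Σ_B u m = 0` is annihilated by `L` outside `B`, and inside `B` the part of
`L u` coming from `Bᶜ` is `-(Σ_{y ∉ B} k(d(x₀,y)) m(y)) u(x)`. If moreover `u(y) ≠ u(x)` forces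
`d(x,y) = diam B` for `x, y ∈ B`, the part coming from `B` is `k(diam B) Σ_B (u(y) - u(x)) m(y) =
-k(diam B) m(B) u(x)`. The function `φ` has exactly these properties. -/

section Ultrametric

variable {X : Type*} [Fintype X] {d : X → X → ℝ}

lemma dist_eq_of_mem_uball_of_notMem (hsymm : ∀ x y, d x y = d y x)
    (hultra : ∀ x y z, d x z ≤ max (d x y) (d y z))
    {c x y : X} {r : ℝ} (hx : x ∈ uball d c r) (hy : y ∉ uball d c r) :
    d x y = d c y := by
  simp only [uball, mem_filter, mem_univ, true_and, not_le] at hx hy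
  apply le_antisymm
  · exact (hultra x c y).trans (max_le (by rw [hsymm]; linarith) le_rfl)
  · rcases le_max_iff.mp (hultra c x y) with h | h <;> linarith

lemma IsBall.dist_eq_of_mem_of_notMem (hsymm : ∀ x y, d x y = d y x)
    (hultra : ∀ x y z, d x z ≤ max (d x y) (d y z))
    {B : Finset X} (hB : IsBall d B) {a b z : X} (ha : a ∈ B) (hb : b ∈ B) (hz : z ∉ B) :
    d a z = d b z := by
  obtain ⟨c, r, -, rfl⟩ := hB
  rw [dist_eq_of_mem_uball_of_notMem hsymm hultra ha hz,
    dist_eq_of_mem_uball_of_notMem hsymm hultra hb hz]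

variable [DecidableEq X] {B : Finset X} (k : ℝ → ℝ) (m : X → ℝ) {u : X → ℝ}

lemma laplacian_apply_of_notMem_ball (hsymm : ∀ x y, d x y = d y x)
    (hultra : ∀ x y z, d x z ≤ max (d x y) (d y z)) (hB : IsBall d B)
    (hsupp : ∀ y ∉ B, u y = 0) (hmean : ∑ y ∈ B, u y * m y = 0)
    {x₀ x : X} (hx₀ : x₀ ∈ B) (hx : x ∉ B) :
    ∑ y, k (d x y) * (u y - u x) * m y = 0 := by
  rw [← sum_add_sum_compl B]
  have hinside : ∑ y ∈ B, k (d x y) * (u y - u x) * m y = k (d x x₀) * ∑ y ∈ B, u y * m y := by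
    rw [mul_sum]
    refine sum_congr rfl fun y hy => ?_
    rw [hsymm x y, hsymm x x₀, hB.dist_eq_of_mem_of_notMem hsymm hultra hy hx₀ hx, hsupp x hx]
    ring
  have houtside : ∑ y ∈ Bᶜ, k (d x y) * (u y - u x) * m y = 0 :=
    sum_eq_zero fun y hy => by rw [hsupp y (mem_compl.mp hy), hsupp x hx]; ring
  rw [hinside, houtside, hmean]; ring

lemma laplacian_apply_of_mem_ball (hsymm : ∀ x y, d x y = d y x)
    (hultra : ∀ x y z, d x z ≤ max (d x y) (d y z)) (hB : IsBall d B)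
    (hsupp : ∀ y ∉ B, u y = 0) (hmean : ∑ y ∈ B, u y * m y = 0)
    (hdiam : ∀ x ∈ B, ∀ y ∈ B, u y = u x ∨ d x y = fdiam d B)
    {x₀ x : X} (hx₀ : x₀ ∈ B) (hx : x ∈ B) :
    ∑ y, k (d x y) * (u y - u x) * m y = lamB d k m B x₀ * u x := by
  rw [← sum_add_sum_compl B]
  have hinside : ∑ y ∈ B, k (d x y) * (u y - u x) * m y = -(k (fdiam d B) * mass m B * u x) :=
    calc ∑ y ∈ B, k (d x y) * (u y - u x) * m y
        = k (fdiam d B) * (∑ y ∈ B, u y * m y - u x * mass m B) := by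
          rw [mass, mul_sum, ← sum_sub_distrib, mul_sum]
          refine sum_congr rfl fun y hy => ?_
          rcases hdiam x hx y hy with h | h <;> rw [h] <;> ring
      _ = -(k (fdiam d B) * mass m B * u x) := by rw [hmean]; ring
  have houtside : ∑ y ∈ Bᶜ, k (d x y) * (u y - u x) * m y
      = -(∑ y ∈ Bᶜ, k (d x₀ y) * m y) * u x := by
    rw [neg_mul, sum_mul, ← sum_neg_distrib]
    refine sum_congr rfl fun y hy => ?_
    rw [hB.dist_eq_of_mem_of_notMem hsymm hultra hx hx₀ (mem_compl.mp hy),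
      hsupp y (mem_compl.mp hy)]
    ring
  rw [hinside, houtside, lamB]; ring

lemma laplacian_eq_lamB_mul_of_ball (hsymm : ∀ x y, d x y = d y x)
    (hultra : ∀ x y z, d x z ≤ max (d x y) (d y z)) (hB : IsBall d B)
    (hsupp : ∀ y ∉ B, u y = 0) (hmean : ∑ y ∈ B, u y * m y = 0)
    (hdiam : ∀ x ∈ B, ∀ y ∈ B, u y = u x ∨ d x y = fdiam d B)
    {x₀ : X} (hx₀ : x₀ ∈ B) (x : X) :
    ∑ y, k (d x y) * (u y - u x) * m y = lamB d k m B x₀ * u x := by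
  by_cases hx : x ∈ B
  · exact laplacian_apply_of_mem_ball k m hsymm hultra hB hsupp hmean hdiam hx₀ hx
  · rw [laplacian_apply_of_notMem_ball k m hsymm hultra hB hsupp hmean hx₀ hx, hsupp x hx,
      mul_zero]

end Ultrametric

lemma mass_pos {X : Type*} [Fintype X] {m : X → ℝ} (hm : ∀ x, 0 < m x) {A : Finset X}
    (hA : A.Nonempty) : 0 < mass m A :=
  sum_pos (fun x _ => hm x) hA

lemma sum_ite_mem_inv_mass_mul {X : Type*} [Fintype X] [DecidableEq X] (m : X → ℝ) {A B : Finset X}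
    (hAB : A ⊆ B) (hA : mass m A ≠ 0) :
    ∑ y ∈ B, (if y ∈ A then (mass m A)⁻¹ else 0) * m y = 1 := by
  simp only [ite_mul, zero_mul, sum_ite_mem, inter_eq_right.mpr hAB, ← mul_sum]
  exact inv_mul_cancel₀ hA

theorem stmt0_general {X : Type*} [Fintype X] [DecidableEq X]
    (d : X → X → ℝ)
    (hsymm : ∀ x y, d x y = d y x)
    (hultra : ∀ x y z, d x z ≤ max (d x y) (d y z))
    (m : X → ℝ) (hm : ∀ x, 0 < m x) (k : ℝ → ℝ)
    (B B' : Finset X) (hB : IsBall d B)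
    (hne : B'.Nonempty) (hss : B' ⊂ B)
    (hconst : ∀ x ∈ B', ∀ y ∈ B \ B', d x y = fdiam d B)
    (x₀ : X) (hx₀ : x₀ ∈ B') :
    let φ : X → ℝ := fun x =>
      (if x ∈ B' then (mass m B')⁻¹ else 0) - (if x ∈ B then (mass m B)⁻¹ else 0)
    φ ≠ 0 ∧
      ∀ x, (∑ y, k (d x y) * (φ y - φ x) * m y) = lamB d k m B x₀ * φ x := by
  intro φ
  have hsub := hss.subset
  have hB'pos := mass_pos hm hne
  have hBpos := mass_pos hm (hne.mono hsub)
  obtain ⟨z, hzB, hzB'⟩ := exists_of_ssubset hss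
  refine ⟨fun hφ => ?_, laplacian_eq_lamB_mul_of_ball k m hsymm hultra hB ?supp ?mean ?diam
    (hsub hx₀)⟩
  · have := congrFun hφ z
    simp only [φ, hzB, hzB', if_true, if_false, Pi.zero_apply, zero_sub, neg_eq_zero,
      inv_eq_zero] at this
    exact hBpos.ne' this
  case supp =>
    intro y hy
    have hy' : y ∉ B' := fun h => hy (hsub h)
    simp [φ, hy, hy']
  case mean =>
    simp only [φ, sub_mul, sum_sub_distrib]
    rw [sum_ite_mem_inv_mass_mul m hsub hB'pos.ne', sum_ite_mem_inv_mass_mul m subset_rfl hBpos.ne',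
      sub_self]
  case diam =>
    intro x hx y hy
    by_cases hx' : x ∈ B' <;> by_cases hy' : y ∈ B'
    · simp [φ, hx, hy, hx', hy']
    · exact .inr (hconst x hx' y (mem_sdiff.mpr ⟨hy, hy'⟩))
    · exact .inr (hsymm x y ▸ hconst y hy' x (mem_sdiff.mpr ⟨hx, hx'⟩))
    · simp [φ, hx, hy, hx', hy']

/-- If `B' ⊊ B` are balls with `d(x,y) = diam B` for all `x ∈ B'`,
`y ∈ B \ B'`, then `φ = 1_{B'}/m(B') − 1_B/m(B)` is a nonzero eigenfunction of the
ultrametric Laplacian with eigenvalue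
`λ = −(Σ_{y ∉ B} k(d(x₀,y))·m(y) + k(diam B)·m(B))`, for `x₀ ∈ B'`. -/
theorem stmt0 {X : Type*} [Fintype X] [DecidableEq X]
    (hX : 1 < Fintype.card X)
    (d : X → X → ℝ)
    (hd0 : ∀ x y, d x y = 0 ↔ x = y)
    (hsymm : ∀ x y, d x y = d y x)
    (hultra : ∀ x y z, d x z ≤ max (d x y) (d y z))
    (m : X → ℝ) (hm : ∀ x, 0 < m x) (k : ℝ → ℝ)
    (B B' : Finset X) (hB : IsBall d B) (hB' : IsBall d B')
    (hne : B'.Nonempty) (hss : B' ⊂ B)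
    (hconst : ∀ x ∈ B', ∀ y ∈ B \ B', d x y = fdiam d B)
    (x₀ : X) (hx₀ : x₀ ∈ B') :
    let φ : X → ℝ := fun x =>
      (if x ∈ B' then (mass m B')⁻¹ else 0) - (if x ∈ B then (mass m B)⁻¹ else 0)
    φ ≠ 0 ∧
      ∀ x, (∑ y, k (d x y) * (φ y - φ x) * m y) = lamB d k m B x₀ * φ x :=
  stmt0_general d hsymm hultra m hm k B B' hB hne hss hconst x₀ hx₀
end

section
/- Assume k is nonincreasing on [0,∞). Let B ⊆ B' be balls of X and let x₀ ∈ B. Then Σ_{y ∉ B} k(d(x₀,y))·m(y) + k(diam B)·m(B) ≥ Σ_{y ∉ B'} k(d(x₀,y))·m(y) + k(diam B')·m(B'); equivalently, the attached eigenvalues satisfy λ(B) ≤ λ(B'). -/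
open scoped Classical
open Finset

/-!
Write `D = diam B ≤ D' = diam B'`. Splitting `Bᶜ = (B' \ B) ∪ B'ᶜ` and `m(B') = m(B' \ B) + m(B)`,
the two sums differ by `Σ_{y ∈ B' \ B} (k(d(x₀,y)) − k(D'))·m(y) + (k(D) − k(D'))·m(B)`.
Both terms are nonnegative because `k` is nonincreasing: `d(x₀,y) ≤ D'` for `y ∈ B'`, and `D ≤ D'`.
-/

lemma ultrametric_nonneg {X : Type*} {d : X → X → ℝ} (hdiag : ∀ x, d x x = 0)
    (hsymm : ∀ x y, d x y = d y x) (hultra : ∀ x y z, d x z ≤ max (d x y) (d y z))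
    (x y : X) : 0 ≤ d x y := by
  simpa [hdiag, hsymm y x] using hultra x y x

section
variable {X : Type*} [Fintype X]

lemma le_fdiam {d : X → X → ℝ} {B : Finset X} {x y : X} (hx : x ∈ B) (hy : y ∈ B) :
    d x y ≤ fdiam d B := by
  rw [fdiam, dif_pos ⟨(x, y), mk_mem_product hx hy⟩]
  exact le_sup' (fun p : X × X => d p.1 p.2) (mk_mem_product hx hy)

lemma fdiam_mono {d : X → X → ℝ} {B B' : Finset X} (hss : B ⊆ B') (hB : B.Nonempty) :
    fdiam d B ≤ fdiam d B' := by
  rw [fdiam, dif_pos (hB.product hB)]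
  exact sup'_le _ _ fun p hp => le_fdiam (hss (mem_product.1 hp).1) (hss (mem_product.1 hp).2)

lemma lamB_mono [DecidableEq X] {d : X → X → ℝ} {k : ℝ → ℝ} {m : X → ℝ} {B B' : Finset X}
    {x₀ : X} (hd : ∀ y, 0 ≤ d x₀ y) (hm : ∀ x, 0 ≤ m x) (hk : AntitoneOn k (Set.Ici 0))
    (hss : B ⊆ B') (hx₀ : x₀ ∈ B) : lamB d k m B x₀ ≤ lamB d k m B' x₀ := by
  have hD : 0 ≤ fdiam d B := (hd x₀).trans (le_fdiam hx₀ hx₀)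
  have hDD' : fdiam d B ≤ fdiam d B' := fdiam_mono hss ⟨x₀, hx₀⟩
  have hcompl : ∑ y ∈ Bᶜ, k (d x₀ y) * m y
      = ∑ y ∈ B' \ B, k (d x₀ y) * m y + ∑ y ∈ B'ᶜ, k (d x₀ y) * m y := by
    rw [← sum_sdiff (compl_subset_compl.2 hss), compl_sdiff_compl]
  have hmass : mass m B' = ∑ y ∈ B' \ B, m y + mass m B := (sum_sdiff hss).symm
  have hshell : k (fdiam d B') * ∑ y ∈ B' \ B, m y ≤ ∑ y ∈ B' \ B, k (d x₀ y) * m y := by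
    rw [mul_sum]
    refine sum_le_sum fun y hy => mul_le_mul_of_nonneg_right ?_ (hm y)
    exact hk (hd y) (hD.trans hDD') (le_fdiam (hss hx₀) (sdiff_subset hy))
  have hcore : k (fdiam d B') * mass m B ≤ k (fdiam d B) * mass m B :=
    mul_le_mul_of_nonneg_right (hk hD (hD.trans hDD') hDD') (sum_nonneg fun x _ => hm x)
  rw [lamB, lamB, hcompl, hmass, mul_add]
  linarith

end

theorem stmt2_general {X : Type*} [Fintype X] [DecidableEq X]
    (d : X → X → ℝ)
    (hd0 : ∀ x y, d x y = 0 ↔ x = y)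
    (hsymm : ∀ x y, d x y = d y x)
    (hultra : ∀ x y z, d x z ≤ max (d x y) (d y z))
    (m : X → ℝ) (hm : ∀ x, 0 < m x) (k : ℝ → ℝ)
    (hk : ∀ a b, 0 ≤ a → a ≤ b → k b ≤ k a)
    (B B' : Finset X)
    (hss : B ⊆ B') (x₀ : X) (hx₀ : x₀ ∈ B) :
    ((∑ y ∈ B'ᶜ, k (d x₀ y) * m y) + k (fdiam d B') * mass m B'
        ≤ (∑ y ∈ Bᶜ, k (d x₀ y) * m y) + k (fdiam d B) * mass m B) ∧
    lamB d k m B x₀ ≤ lamB d k m B' x₀ := by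
  have hdist : ∀ y, 0 ≤ d x₀ y := ultrametric_nonneg (fun x => (hd0 x x).2 rfl) hsymm hultra x₀
  have hlam : lamB d k m B x₀ ≤ lamB d k m B' x₀ :=
    lamB_mono hdist (fun x => (hm x).le) (fun a ha b _ hab => hk a b ha hab) hss hx₀
  exact ⟨neg_le_neg_iff.1 hlam, hlam⟩

/-- If `k` is nonincreasing on `[0,∞)` and `B ⊆ B'` are balls with
`x₀ ∈ B`, then the exterior-plus-diagonal sums are monotone and `λ(B) ≤ λ(B')`. -/
theorem stmt2 {X : Type*} [Fintype X] [DecidableEq X]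
    (hX : 1 < Fintype.card X)
    (d : X → X → ℝ)
    (hd0 : ∀ x y, d x y = 0 ↔ x = y)
    (hsymm : ∀ x y, d x y = d y x)
    (hultra : ∀ x y z, d x z ≤ max (d x y) (d y z))
    (m : X → ℝ) (hm : ∀ x, 0 < m x) (k : ℝ → ℝ)
    (hk : ∀ a b, 0 ≤ a → a ≤ b → k b ≤ k a)
    (B B' : Finset X) (hB : IsBall d B) (hB' : IsBall d B')
    (hss : B ⊆ B') (x₀ : X) (hx₀ : x₀ ∈ B) :
    ((∑ y ∈ B'ᶜ, k (d x₀ y) * m y) + k (fdiam d B') * mass m B'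
        ≤ (∑ y ∈ Bᶜ, k (d x₀ y) * m y) + k (fdiam d B) * mass m B) ∧
    lamB d k m B x₀ ≤ lamB d k m B' x₀ :=
  stmt2_general d hd0 hsymm hultra m hm k hk B B' hss x₀ hx₀
end

section
/- Assume that for every ball B of X with at least two elements and B ⊊ X one has k(diam B) − k(diam B⁺) > 0. For such balls set a(B) = m(B)·(k(diam B) − k(diam B⁺)), and set a(X) = m(X)·k(diam X). Then for every f : X → ℝ and every x ∈ X, Σ_{y ∈ X} k(d(x,y))·(f(y) − f(x))·m(y) = −Σ_B a(B)·( f(x) − (1/m(B))·Σ_{y ∈ B} f(y)·m(y) ), where the sum on the right ranges over all balls B of X that contain x and have at least two elements (including B = X). That is, the ultrametric Laplacian coincides with the hierarchical Laplacian with weights a. -/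
open scoped Classical
open Finset

/-!
Fix `x`. The balls containing `x` with at least two points form a chain `B(x, t)`, indexed by
the distances `t = d(x,y) > 0`, and the parent of `B(x, t)` is `B(x, t⁺)` for the next such
distance `t⁺`. Hence `a(B(x, t)) / m(B(x, t)) = k t - k t⁺` (with `k t⁺ := 0` at the top), and
after exchanging the sums over balls and points, the coefficient of `(f x - f y) m(y)` is the
telescoping sum of `k t - k t⁺` over all `t ≥ d(x,y)`, which is `k (d x y)`.
-/

namespace Finset

variable {α β : Type*} [LinearOrder α] [AddCommGroup β]

/-- `k t - k t⁺`, where `t⁺` is the successor of `t` in `T`, and `k t⁺ := 0` if there is none. -/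
noncomputable def dropToSucc (T : Finset α) (k : α → β) (t : α) : β :=
  k t - if h : (T.filter (t < ·)).Nonempty then k ((T.filter (t < ·)).min' h) else 0

theorem dropToSucc_of_isLeast {T : Finset α} (k : α → β) {t u : α}
    (hu : IsLeast {v ∈ T | t < v} u) : T.dropToSucc k t = k t - k u := by
  have hne : (T.filter (t < ·)).Nonempty := ⟨u, mem_filter.2 hu.1⟩
  rw [dropToSucc, dif_pos hne]
  congr 2
  exact le_antisymm (min'_le _ _ (mem_filter.2 hu.1))
    (hu.2 (by simpa using min'_mem _ hne))

theorem dropToSucc_of_forall_le {T : Finset α} (k : α → β) {t : α} (ht : ∀ v ∈ T, v ≤ t) :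
    T.dropToSucc k t = k t := by
  have hne : ¬(T.filter (t < ·)).Nonempty := fun ⟨v, hv⟩ ↦
    (mem_filter.1 hv).2.not_ge (ht v (mem_filter.1 hv).1)
  rw [dropToSucc, dif_neg hne, sub_zero]

theorem sum_filter_le_dropToSucc (T : Finset α) (k : α → β) {s : α} (hs : s ∈ T) :
    ∑ t ∈ T with s ≤ t, T.dropToSucc k t = k s := by
  induction hn : (T.filter (s < ·)).card using Nat.strong_induction_on generalizing s with
  | _ n ih =>
  have hsplit : T.filter (s ≤ ·) = insert s (T.filter (s < ·)) := by
    ext t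
    simp only [mem_filter, mem_insert, le_iff_eq_or_lt]
    constructor
    · rintro ⟨htT, rfl | hst⟩ <;> simp_all
    · rintro (rfl | ⟨htT, hst⟩) <;> simp_all
  rw [hsplit, sum_insert (by simp), dropToSucc]
  split_ifs with hne
  · set s' := (T.filter (s < ·)).min' hne
    have hs' : s' ∈ T ∧ s < s' := mem_filter.1 (min'_mem _ hne)
    have hgt : T.filter (s < ·) = T.filter (s' ≤ ·) := by
      ext t
      simp only [mem_filter, and_congr_right_iff]
      exact fun htT ↦ ⟨fun hst ↦ min'_le _ _ (mem_filter.2 ⟨htT, hst⟩), hs'.2.trans_le⟩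
    have hcard : (T.filter (s' < ·)).card < n := by
      rw [← hn]
      refine card_lt_card ⟨fun t ht ↦ ?_, fun h ↦ ?_⟩
      · exact mem_filter.2 ⟨(mem_filter.1 ht).1, hs'.2.trans (mem_filter.1 ht).2⟩
      · exact lt_irrefl s' (mem_filter.1 (h (min'_mem _ hne))).2
    rw [hgt, ih _ hcard hs'.1 rfl, sub_add_cancel]
  · rw [not_nonempty_iff_eq_empty.1 hne, sum_empty, sub_zero, add_zero]

end Finset

section Ultrametric

variable {X : Type*} {d : X → X → ℝ}

theorem self_le_of_ultra (hsymm : ∀ x y, d x y = d y x)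
    (hultra : ∀ x y z, d x z ≤ max (d x y) (d y z)) (x y : X) : d x x ≤ d x y := by
  simpa [hsymm y x] using hultra x y x

variable [Fintype X]

@[simp]
theorem mem_uball {x y : X} {r : ℝ} : y ∈ uball d x r ↔ d x y ≤ r := by
  simp [uball]

theorem uball_eq_uball_of_mem (hsymm : ∀ x y, d x y = d y x)
    (hultra : ∀ x y z, d x z ≤ max (d x y) (d y z)) {c x : X} {r : ℝ}
    (hx : x ∈ uball d c r) : uball d c r = uball d x r := by
  rw [mem_uball] at hx
  ext y
  simp only [mem_uball]
  constructor
  · exact fun h ↦ (hultra x c y).trans (max_le (hsymm x c ▸ hx) h)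
  · exact fun h ↦ (hultra c x y).trans (max_le hx h)

theorem fdiam_eq_sup' (hsymm : ∀ x y, d x y = d y x)
    (hultra : ∀ x y z, d x z ≤ max (d x y) (d y z)) {B : Finset X} {x : X} (hx : x ∈ B) :
    fdiam d B = B.sup' ⟨x, hx⟩ (d x) := by
  rw [fdiam, dif_pos ⟨(x, x), mem_product.2 ⟨hx, hx⟩⟩]
  refine le_antisymm (sup'_le _ _ fun p hp ↦ ?_) (sup'_le _ _ fun y hy ↦ ?_)
  · obtain ⟨ha, hb⟩ := mem_product.1 hp
    exact (hultra p.1 x p.2).trans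
      (max_le (hsymm p.1 x ▸ le_sup' (d x) ha) (le_sup' (d x) hb))
  · exact le_sup' (fun p : X × X ↦ d p.1 p.2) (show (x, y) ∈ B ×ˢ B from mem_product.2 ⟨hx, hy⟩)

theorem fdiam_uball_dist (hsymm : ∀ x y, d x y = d y x)
    (hultra : ∀ x y z, d x z ≤ max (d x y) (d y z)) (x z : X) :
    fdiam d (uball d x (d x z)) = d x z := by
  have hx : x ∈ uball d x (d x z) := mem_uball.2 (self_le_of_ultra hsymm hultra x z)
  rw [fdiam_eq_sup' hsymm hultra hx]
  exact le_antisymm (sup'_le _ _ fun y hy ↦ mem_uball.1 hy) (le_sup' (d x) (mem_uball.2 le_rfl))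

theorem IsBall.eq_uball_fdiam (hsymm : ∀ x y, d x y = d y x)
    (hultra : ∀ x y z, d x z ≤ max (d x y) (d y z)) {B : Finset X} (hB : IsBall d B)
    {x : X} (hx : x ∈ B) : B = uball d x (fdiam d B) := by
  obtain ⟨c, r, -, rfl⟩ := hB
  have hre := uball_eq_uball_of_mem hsymm hultra hx
  rw [hre] at hx ⊢
  rw [fdiam_eq_sup' hsymm hultra hx]
  ext y
  simp only [mem_uball]
  exact ⟨fun h ↦ le_sup' (d x) (mem_uball.2 h),
    fun h ↦ h.trans (sup'_le _ _ fun z hz ↦ mem_uball.1 hz)⟩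

variable [DecidableEq X]

/-- The radii of the balls around `x` with at least two points. -/
noncomputable def ballRadii (d : X → X → ℝ) (x : X) : Finset ℝ :=
  ({x}ᶜ : Finset X).image (d x)

@[simp]
theorem mem_ballRadii {x : X} {t : ℝ} : t ∈ ballRadii d x ↔ ∃ y, y ≠ x ∧ d x y = t := by
  simp [ballRadii]

theorem filter_isBall_eq_image_ballRadii (hd0 : ∀ x y, d x y = 0 ↔ x = y)
    (hsymm : ∀ x y, d x y = d y x) (hultra : ∀ x y z, d x z ≤ max (d x y) (d y z)) (x : X) :
    univ.filter (fun B : Finset X ↦ IsBall d B ∧ x ∈ B ∧ 1 < B.card) =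
      (ballRadii d x).image (uball d x) := by
  have hxx : d x x = 0 := (hd0 x x).2 rfl
  ext B
  simp only [mem_filter, mem_univ, true_and, mem_image, mem_ballRadii]
  constructor
  · rintro ⟨hB, hx, hcard⟩
    obtain ⟨y, hy, hyx⟩ := (one_lt_card_iff_nontrivial.1 hcard).exists_ne x
    obtain ⟨z, -, hdiam⟩ := exists_mem_eq_sup' ⟨x, hx⟩ (d x)
    rw [← fdiam_eq_sup' hsymm hultra hx] at hdiam
    have hyB : d x y ≤ fdiam d B := by
      rw [fdiam_eq_sup' hsymm hultra hx]
      exact le_sup' (d x) hy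
    have hzx : z ≠ x := by
      rintro rfl
      have hzy : d z y = 0 :=
        le_antisymm (hxx ▸ hdiam ▸ hyB) (hxx ▸ self_le_of_ultra hsymm hultra z y)
      exact hyx ((hd0 z y).1 hzy).symm
    exact ⟨d x z, ⟨z, hzx, rfl⟩, (hdiam ▸ hB.eq_uball_fdiam hsymm hultra hx).symm⟩
  · rintro ⟨_, ⟨y, hyx, rfl⟩, rfl⟩
    have hxy : d x x ≤ d x y := self_le_of_ultra hsymm hultra x y
    refine ⟨⟨x, d x y, hxx ▸ hxy, rfl⟩, mem_uball.2 hxy, ?_⟩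
    exact one_lt_card.2 ⟨x, mem_uball.2 hxy, y, mem_uball.2 le_rfl, hyx.symm⟩

end Ultrametric

section HierarchicalWeight

variable {X : Type*} [Fintype X]

theorem mass_mul_mul_sub_inv_mul_sum {m : X → ℝ} {B : Finset X} (hB : mass m B ≠ 0)
    (c a : ℝ) (f : X → ℝ) :
    mass m B * c * (a - (mass m B)⁻¹ * ∑ y ∈ B, f y * m y) = c * ∑ y ∈ B, (a - f y) * m y := by
  have hsum : ∑ y ∈ B, (a - f y) * m y = a * mass m B - ∑ y ∈ B, f y * m y := by
    simp only [mass, sub_mul, sum_sub_distrib, mul_sum]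
  rw [hsum]
  field_simp

variable [DecidableEq X] {d : X → X → ℝ}

/-- The weight `a(B)` of the hierarchical Laplacian, the parent `B⁺` being computed from `x ∈ B`. -/
noncomputable def hierWeight (d : X → X → ℝ) (k : ℝ → ℝ) (m : X → ℝ) (B : Finset X) (x : X) :
    ℝ :=
  if B = univ then mass m univ * k (fdiam d univ)
  else mass m B * (k (fdiam d B) - k (fdiam d (parentB d B x)))

theorem hierWeight_uball (hsymm : ∀ x y, d x y = d y x)
    (hultra : ∀ x y z, d x z ≤ max (d x y) (d y z)) (k : ℝ → ℝ) (m : X → ℝ) (x y : X) :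
    hierWeight d k m (uball d x (d x y)) x =
      mass m (uball d x (d x y)) * (ballRadii d x).dropToSucc k (d x y) := by
  set B := uball d x (d x y)
  have hdiam : fdiam d B = d x y := fdiam_uball_dist hsymm hultra x y
  by_cases hU : B = univ
  · rw [hierWeight, if_pos hU, ← hU, hdiam, dropToSucc_of_forall_le]
    intro _ hv
    obtain ⟨w, -, rfl⟩ := mem_ballRadii.1 hv
    have hw : w ∈ B := by rw [hU]; exact mem_univ w
    exact mem_uball.1 hw
  · have hc : Bᶜ.Nonempty := nonempty_iff_ne_empty.2 (by rwa [Ne, compl_eq_empty_iff])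
    obtain ⟨z, hz, hmin⟩ := exists_mem_eq_inf' hc (d x)
    have hyz : d x y < d x z := by simpa [B] using hz
    have hpar : parentR d B x = d x z := by rw [parentR, dif_pos hc, hmin]
    rw [hierWeight, if_neg hU, parentB, hpar, hdiam, fdiam_uball_dist hsymm hultra,
      dropToSucc_of_isLeast k (u := d x z)]
    refine ⟨⟨mem_ballRadii.2 ⟨z, ?_, rfl⟩, hyz⟩, ?_⟩
    · rintro rfl
      exact (self_le_of_ultra hsymm hultra _ y).not_gt hyz
    · rintro _ ⟨hv, hyv⟩
      obtain ⟨w, -, rfl⟩ := mem_ballRadii.1 hv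
      exact hmin ▸ inf'_le (d x) (by simpa [B] using hyv)

end HierarchicalWeight

theorem stmt4_general {X : Type*} [Fintype X] [DecidableEq X]
    (d : X → X → ℝ)
    (hd0 : ∀ x y, d x y = 0 ↔ x = y)
    (hsymm : ∀ x y, d x y = d y x)
    (hultra : ∀ x y z, d x z ≤ max (d x y) (d y z))
    (m : X → ℝ) (hm : ∀ x, 0 < m x) (k : ℝ → ℝ) :
    ∀ (f : X → ℝ) (x : X),
      (∑ y, k (d x y) * (f y - f x) * m y) =
        -∑ B ∈ Finset.univ.filter
            (fun B : Finset X => IsBall d B ∧ x ∈ B ∧ 1 < B.card),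
          (if B = Finset.univ then mass m Finset.univ * k (fdiam d Finset.univ)
           else mass m B * (k (fdiam d B) - k (fdiam d (parentB d B x)))) *
            (f x - (mass m B)⁻¹ * ∑ y ∈ B, f y * m y) := by
  intro f x
  set T := ballRadii d x
  have hinj : Set.InjOn (uball d x) T := by
    rintro _ h₁ _ h₂ he
    obtain ⟨y₁, -, rfl⟩ := mem_ballRadii.1 h₁
    obtain ⟨y₂, -, rfl⟩ := mem_ballRadii.1 h₂
    rw [← fdiam_uball_dist hsymm hultra x y₁, he, fdiam_uball_dist hsymm hultra]
  change _ = -∑ B ∈ _, hierWeight d k m B x * _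
  rw [filter_isBall_eq_image_ballRadii hd0 hsymm hultra x, sum_image hinj]
  calc ∑ y, k (d x y) * (f y - f x) * m y
      = -∑ y, ∑ t ∈ T with d x y ≤ t, T.dropToSucc k t * ((f x - f y) * m y) := by
        rw [← sum_neg_distrib]
        refine sum_congr rfl fun y _ ↦ ?_
        rcases eq_or_ne y x with rfl | hyx
        · simp
        · rw [← sum_mul, sum_filter_le_dropToSucc T k (mem_ballRadii.2 ⟨y, hyx, rfl⟩)]
          ring
    _ = -∑ t ∈ T, T.dropToSucc k t * ∑ y ∈ uball d x t, (f x - f y) * m y := by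
        simp_rw [mul_sum]
        rw [sum_comm' (t' := T) (s' := uball d x) fun y t ↦ by simp [and_comm]]
    _ = -∑ t ∈ T, hierWeight d k m (uball d x t) x *
          (f x - (mass m (uball d x t))⁻¹ * ∑ y ∈ uball d x t, f y * m y) := by
        congr 1
        refine sum_congr rfl fun t ht ↦ ?_
        obtain ⟨y, -, rfl⟩ := mem_ballRadii.1 ht
        have hmass : mass m (uball d x (d x y)) ≠ 0 :=
          (sum_pos (fun z _ ↦ hm z) ⟨x, mem_uball.2 (self_le_of_ultra hsymm hultra x y)⟩).ne'
        rw [hierWeight_uball hsymm hultra, mass_mul_mul_sub_inv_mul_sum hmass]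

/-- Under the strict monotonicity condition
`k(diam B) − k(diam B⁺) > 0` for balls `B ⊊ X` with at least two elements, the
ultrametric Laplacian coincides with the hierarchical Laplacian with weights
`a(B) = m(B)·(k(diam B) − k(diam B⁺))` and `a(X) = m(X)·k(diam X)`. -/
theorem stmt4 {X : Type*} [Fintype X] [DecidableEq X]
    (hX : 1 < Fintype.card X)
    (d : X → X → ℝ)
    (hd0 : ∀ x y, d x y = 0 ↔ x = y)
    (hsymm : ∀ x y, d x y = d y x)
    (hultra : ∀ x y z, d x z ≤ max (d x y) (d y z))
    (m : X → ℝ) (hm : ∀ x, 0 < m x) (k : ℝ → ℝ)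
    (hmono : ∀ B : Finset X, IsBall d B → 1 < B.card → B ≠ Finset.univ →
      ∀ x ∈ B, 0 < k (fdiam d B) - k (fdiam d (parentB d B x))) :
    ∀ (f : X → ℝ) (x : X),
      (∑ y, k (d x y) * (f y - f x) * m y) =
        -∑ B ∈ Finset.univ.filter
            (fun B : Finset X => IsBall d B ∧ x ∈ B ∧ 1 < B.card),
          (if B = Finset.univ then mass m Finset.univ * k (fdiam d Finset.univ)
           else mass m B * (k (fdiam d B) - k (fdiam d (parentB d B x)))) *
            (f x - (mass m B)⁻¹ * ∑ y ∈ B, f y * m y) :=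
  stmt4_general d hd0 hsymm hultra m hm k
end

section
/- For every t ∈ ℝ and every z ∈ X, Σ_{y ∈ X} m(y)·(exp(tL))_{y,z} = m(z); equivalently, for every u : X → ℝ and every t ∈ ℝ, Σ_{y ∈ X} (exp(tL) u)(y)·m(y) = Σ_{y ∈ X} u(y)·m(y). That is, the weight m is invariant under the semigroup generated by the ultrametric Laplacian. -/
/-! The weighted Laplacian is symmetric with respect to `m`: `m y * L y z = m z * k (d z y) * m y`
for `y ≠ z`, so the column sums of `diag(m) L` cancel against the diagonal and `m` is a left null
vector of `L`. Every term of the exponential series but the constant one then kills `m`, so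
`m ᵥ* exp (t L) = m`; the statement about `exp (t L) *ᵥ u` is its transpose. -/

open scoped Classical
open Finset

open scoped Nat Matrix
open Matrix

theorem NormedSpace.mul_exp_of_mul_eq_zero {𝕂 𝔸 : Type*} [RCLike 𝕂] [NormedRing 𝔸]
    [NormedAlgebra 𝕂 𝔸] [CompleteSpace 𝔸] {a b : 𝔸} (h : b * a = 0) :
    b * NormedSpace.exp a = b := by
  have hterm : ∀ n, b * ((n !⁻¹ : 𝕂) • a ^ n) = if n = 0 then b else 0 := by
    rintro (_ | n)
    · simp
    · rw [mul_smul_comm, pow_succ', ← mul_assoc, h, zero_mul, smul_zero, if_neg n.succ_ne_zero]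
  have hsum := (NormedSpace.exp_series_hasSum_exp' (𝕂 := 𝕂) a).mul_left b
  simp only [hterm] at hsum
  exact hsum.unique (hasSum_ite_eq 0 b)

theorem Matrix.vecMul_exp_of_vecMul_eq_zero {n : Type*} [Fintype n] [DecidableEq n]
    {A : Matrix n n ℝ} {v : n → ℝ} (h : v ᵥ* A = 0) : v ᵥ* NormedSpace.exp A = v := by
  -- `NormedSpace.exp` does not depend on a norm; any submultiplicative one makes the series converge.
  let _ := Matrix.linftyOpNormedRing (n := n) (α := ℝ)
  let _ := Matrix.linftyOpNormedAlgebra (n := n) (R := ℝ) (α := ℝ)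
  have hrow : replicateRow n v * A = 0 := by
    rw [← replicateRow_vecMul, h]; rfl
  have key := NormedSpace.mul_exp_of_mul_eq_zero (𝕂 := ℝ) hrow
  rw [← replicateRow_vecMul] at key
  exact funext fun i => congr_fun (congr_fun key i) i

theorem vecMul_ultraLap_eq_zero {X : Type*} [Fintype X] [DecidableEq X] {d : X → X → ℝ}
    (hsymm : ∀ x y, d x y = d y x) (k : ℝ → ℝ) (m : X → ℝ) :
    m ᵥ* ultraLap d k m = 0 := by
  funext z
  have off_diag : ∀ y ∈ ({z}ᶜ : Finset X), m y * ultraLap d k m y z = m z * (k (d z y) * m y) := by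
    intro y hy
    rw [ultraLap, if_neg (Ne.symm (by simpa using hy)), hsymm]
    ring
  rw [vecMul, dotProduct, ← sum_compl_add_sum {z}, sum_singleton, sum_congr rfl off_diag,
    ← mul_sum, ultraLap, if_pos rfl, Pi.zero_apply]
  ring

theorem stmt13_general {X : Type*} [Fintype X] [DecidableEq X]
    (d : X → X → ℝ)
    (hsymm : ∀ x y, d x y = d y x)
    (m : X → ℝ) (k : ℝ → ℝ) :
    (∀ (t : ℝ) (z : X),
        (∑ y, m y * (NormedSpace.exp (t • ultraLap d k m)) y z) = m z) ∧
    (∀ (t : ℝ) (u : X → ℝ),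
        (∑ y, (∑ w, (NormedSpace.exp (t • ultraLap d k m)) y w * u w) * m y) =
          ∑ y, u y * m y) := by
  have invariant (t : ℝ) : m ᵥ* NormedSpace.exp (t • ultraLap d k m) = m := by
    refine vecMul_exp_of_vecMul_eq_zero ?_
    rw [vecMul_smul, vecMul_ultraLap_eq_zero hsymm, smul_zero]
  refine ⟨fun t z => congr_fun (invariant t) z, fun t u => ?_⟩
  calc ∑ y, (∑ w, (NormedSpace.exp (t • ultraLap d k m)) y w * u w) * m y
      = m ⬝ᵥ (NormedSpace.exp (t • ultraLap d k m) *ᵥ u) := dotProduct_comm _ _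
    _ = u ⬝ᵥ m := by rw [dotProduct_mulVec, invariant, dotProduct_comm]

/-- The weight `m` is invariant under the semigroup generated by the
ultrametric Laplacian: `Σ_y m(y)·(exp(tL))_{y,z} = m(z)` and, equivalently,
`Σ_y (exp(tL)u)(y)·m(y) = Σ_y u(y)·m(y)` for all `u`. -/
theorem stmt13 {X : Type*} [Fintype X] [DecidableEq X]
    (hX : 1 < Fintype.card X)
    (d : X → X → ℝ)
    (hd0 : ∀ x y, d x y = 0 ↔ x = y)
    (hsymm : ∀ x y, d x y = d y x)
    (hultra : ∀ x y z, d x z ≤ max (d x y) (d y z))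
    (m : X → ℝ) (hm : ∀ x, 0 < m x) (k : ℝ → ℝ) :
    (∀ (t : ℝ) (z : X),
        (∑ y, m y * (NormedSpace.exp (t • ultraLap d k m)) y z) = m z) ∧
    (∀ (t : ℝ) (u : X → ℝ),
        (∑ y, (∑ w, (NormedSpace.exp (t • ultraLap d k m)) y w * u w) * m y) =
          ∑ y, u y * m y) :=
  stmt13_general d hsymm m k
end

section
/- Assume k is nonincreasing on [0,∞) and Σ_{x ∈ X} m(x) = 1. Then for every t ≥ 0 and every u : X → ℝ with Σ_{y ∈ X} u(y)·m(y) = 0, Σ_{x ∈ X} m(x)·((exp(tL)) u)(x)² ≤ e^{−2·t·k(diam X)} · Σ_{x ∈ X} m(x)·u(x)². That is, on mean-zero functions the heat semigroup contracts in L²(X,m) at exponential rate given by the spectral gap k(diam X). -/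
/-!
Summing by parts against the symmetric kernel `m(x) k(d(x,y)) m(y)`, the Dirichlet form is
`Σ m(x) u(x) (L u)(x) = -½ Σ m(x) m(y) k(d(x,y)) (u(x) - u(y))²`. Since `k` is nonincreasing,
`k(d(x,y)) ≥ k(diam X)`, and for `Σ m = 1`, `Σ u m = 0` the variance identity gives
`Σ m(x) m(y) (u(x) - u(y))² = 2 Σ m u²`; hence the form is at most `-k(diam X) Σ m u²`.
The same antisymmetry shows that the heat flow preserves the mean, so the energy
`E(s) = Σ m (exp(sL) u)²` satisfies `E' ≤ -2 k(diam X) E` for all `s`, and Grönwall concludes.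
-/

open scoped Classical
open Finset

open Matrix

section HeatFlow

variable {ι : Type*} [Fintype ι] [DecidableEq ι]

theorem hasDerivAt_exp_smul_apply (A : Matrix ι ι ℝ) (s : ℝ) (x y : ι) :
    HasDerivAt (fun s : ℝ => NormedSpace.exp (s • A) x y)
      ((A * NormedSpace.exp (s • A)) x y) s := by
  let _ : NormedRing (Matrix ι ι ℝ) := Matrix.linftyOpNormedRing
  let _ : NormedAlgebra ℝ (Matrix ι ι ℝ) := Matrix.linftyOpNormedAlgebra
  exact (Matrix.entryLinearMap ℝ ℝ x y).toContinuousLinearMap.hasFDerivAt.comp_hasDerivAt s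
    (hasDerivAt_exp_smul_const' A s)

theorem hasDerivAt_exp_smul_mulVec_apply (A : Matrix ι ι ℝ) (u : ι → ℝ) (s : ℝ) (x : ι) :
    HasDerivAt (fun s : ℝ => (NormedSpace.exp (s • A) *ᵥ u) x)
      ((A *ᵥ (NormedSpace.exp (s • A) *ᵥ u)) x) s := by
  rw [Matrix.mulVec_mulVec]
  exact HasDerivAt.fun_sum fun y _ => (hasDerivAt_exp_smul_apply A s x y).mul_const (u y)

theorem dotProduct_exp_smul_mulVec {A : Matrix ι ι ℝ} {m : ι → ℝ}
    (hA : ∀ w, m ⬝ᵥ (A *ᵥ w) = 0) (u : ι → ℝ) (s : ℝ) :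
    m ⬝ᵥ (NormedSpace.exp (s • A) *ᵥ u) = m ⬝ᵥ u := by
  have hderiv : ∀ s : ℝ, HasDerivAt (fun s : ℝ => m ⬝ᵥ (NormedSpace.exp (s • A) *ᵥ u)) 0 s := by
    intro s
    rw [← hA (NormedSpace.exp (s • A) *ᵥ u)]
    exact HasDerivAt.fun_sum fun x _ => (hasDerivAt_exp_smul_mulVec_apply A u s x).const_mul (m x)
  simpa using is_const_of_deriv_eq_zero (fun s => (hderiv s).differentiableAt)
    (fun s => (hderiv s).deriv) s 0

theorem le_exp_mul_of_hasDerivAt_le {g g' : ℝ → ℝ} {c t : ℝ}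
    (hg : ∀ s, HasDerivAt g (g' s) s) (hle : ∀ s, g' s ≤ c * g s) (ht : 0 ≤ t) :
    g t ≤ Real.exp (c * t) * g 0 := by
  have hdecay : ∀ s, HasDerivAt (fun s => Real.exp (-(c * s)) * g s)
      (Real.exp (-(c * s)) * (g' s - c * g s)) s := by
    intro s
    refine ((((hasDerivAt_id s).const_mul c).neg.exp).mul (hg s)).congr_deriv ?_
    simp only [Pi.neg_apply, id]
    ring
  have hanti : Antitone fun s => Real.exp (-(c * s)) * g s :=
    antitone_of_deriv_nonpos (fun s => (hdecay s).differentiableAt) fun s => by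
      rw [(hdecay s).deriv]
      exact mul_nonpos_of_nonneg_of_nonpos (Real.exp_pos _).le (by linarith [hle s])
  have h := hanti ht
  simp only [mul_zero, neg_zero, Real.exp_zero, one_mul] at h
  calc g t = Real.exp (c * t) * (Real.exp (-(c * t)) * g t) := by
        rw [← mul_assoc, ← Real.exp_add, add_neg_cancel, Real.exp_zero, one_mul]
    _ ≤ Real.exp (c * t) * g 0 := by gcongr

theorem weighted_sq_exp_smul_mulVec_le (A : Matrix ι ι ℝ) (m u : ι → ℝ) (lam : ℝ) {t : ℝ}
    (ht : 0 ≤ t)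
    (hgap : ∀ s : ℝ, ∑ x, m x * (NormedSpace.exp (s • A) *ᵥ u) x *
        (A *ᵥ (NormedSpace.exp (s • A) *ᵥ u)) x ≤
        -lam * ∑ x, m x * (NormedSpace.exp (s • A) *ᵥ u) x ^ 2) :
    ∑ x, m x * (NormedSpace.exp (t • A) *ᵥ u) x ^ 2 ≤
      Real.exp (-2 * t * lam) * ∑ x, m x * u x ^ 2 := by
  have hderiv : ∀ s : ℝ, HasDerivAt (fun s : ℝ => ∑ x, m x * (NormedSpace.exp (s • A) *ᵥ u) x ^ 2)
      (2 * ∑ x, m x * (NormedSpace.exp (s • A) *ᵥ u) x *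
        (A *ᵥ (NormedSpace.exp (s • A) *ᵥ u)) x) s := by
    intro s
    refine (HasDerivAt.fun_sum fun x _ =>
      ((hasDerivAt_exp_smul_mulVec_apply A u s x).pow 2).const_mul (m x)).congr_deriv ?_
    rw [Finset.mul_sum]
    refine Finset.sum_congr rfl fun x _ => ?_
    push_cast
    ring
  have h := le_exp_mul_of_hasDerivAt_le hderiv (c := -2 * lam) (fun s => by linarith [hgap s]) ht
  simpa [mul_right_comm] using h

end HeatFlow

section SymmetricKernel

variable {ι : Type*} [Fintype ι]

theorem sum_sum_mul_sub_eq_zero {K : ι → ι → ℝ} (hK : ∀ x y, K x y = K y x) (w : ι → ℝ) :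
    ∑ x, ∑ y, K x y * (w y - w x) = 0 := by
  have hswap : ∑ x, ∑ y, K x y * (w y - w x) = -∑ x, ∑ y, K x y * (w y - w x) := by
    conv_lhs => rw [Finset.sum_comm]
    simp only [← Finset.sum_neg_distrib]
    exact Finset.sum_congr rfl fun x _ => Finset.sum_congr rfl fun y _ => by rw [hK]; ring
  linarith

theorem sum_sum_mul_mul_sub {K : ι → ι → ℝ} (hK : ∀ x y, K x y = K y x) (w : ι → ℝ) :
    ∑ x, ∑ y, K x y * w x * (w y - w x) = -(∑ x, ∑ y, K x y * (w x - w y) ^ 2) / 2 := by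
  have hswap : ∑ x, ∑ y, K x y * w x * (w y - w x) = ∑ x, ∑ y, K x y * w y * (w x - w y) := by
    rw [Finset.sum_comm]
    exact Finset.sum_congr rfl fun x _ => Finset.sum_congr rfl fun y _ => by rw [hK]
  have hsum : ∑ x, ∑ y, K x y * w x * (w y - w x) + ∑ x, ∑ y, K x y * w y * (w x - w y) =
      -∑ x, ∑ y, K x y * (w x - w y) ^ 2 := by
    rw [← Finset.sum_add_distrib, ← Finset.sum_neg_distrib]
    refine Finset.sum_congr rfl fun x _ => ?_
    rw [← Finset.sum_add_distrib, ← Finset.sum_neg_distrib]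
    exact Finset.sum_congr rfl fun y _ => by ring
  linarith

theorem sum_sum_mul_mul_sub_sq (m w : ι → ℝ) :
    ∑ x, ∑ y, m x * m y * (w x - w y) ^ 2 =
      2 * ((∑ x, m x) * ∑ x, m x * w x ^ 2 - (∑ x, m x * w x) ^ 2) := by
  calc ∑ x, ∑ y, m x * m y * (w x - w y) ^ 2
      = ∑ x, ∑ y, (m x * w x ^ 2 * m y + m x * (m y * w y ^ 2) - 2 * (m x * w x) * (m y * w y)) :=
        Finset.sum_congr rfl fun x _ => Finset.sum_congr rfl fun y _ => by ring
    _ = 2 * ((∑ x, m x) * ∑ x, m x * w x ^ 2 - (∑ x, m x * w x) ^ 2) := by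
        simp only [Finset.sum_add_distrib, Finset.sum_sub_distrib, ← Finset.mul_sum,
          ← Finset.sum_mul]
        ring

end SymmetricKernel

theorem nonneg_of_ultrametric {X : Type*} {d : X → X → ℝ} (hd : ∀ x, d x x = 0) (hsymm : ∀ x y, d x y = d y x)
    (hultra : ∀ x y z, d x z ≤ max (d x y) (d y z)) (x y : X) : 0 ≤ d x y := by
  simpa [hd, hsymm y x] using hultra x y x

theorem le_fdiam_univ {X : Type*} [Fintype X] (d : X → X → ℝ) (x y : X) :
    d x y ≤ fdiam d univ := by
  have hxy : (x, y) ∈ (univ : Finset X) ×ˢ univ := by simp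
  rw [fdiam, dif_pos ⟨_, hxy⟩]
  exact Finset.le_sup' (fun p : X × X => d p.1 p.2) hxy

section UltrametricLaplacian

variable {X : Type*} [Fintype X] [DecidableEq X] {d : X → X → ℝ} {k : ℝ → ℝ} {m : X → ℝ}

theorem ultraLap_mulVec_apply (w : X → ℝ) (x : X) :
    (ultraLap d k m *ᵥ w) x = ∑ y, k (d x y) * m y * (w y - w x) := by
  have hoff : ∀ y ∈ ({x}ᶜ : Finset X), ultraLap d k m x y * w y = k (d x y) * m y * w y :=
    fun y hy => by simp [ultraLap, (by simpa using hy : y ≠ x)]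
  rw [Matrix.mulVec, dotProduct, Fintype.sum_eq_add_sum_compl x, Finset.sum_congr rfl hoff,
    Fintype.sum_eq_add_sum_compl x fun y => k (d x y) * m y * (w y - w x)]
  simp only [ultraLap, if_true, sub_self, mul_zero, zero_add, mul_sub, Finset.sum_sub_distrib,
    ← Finset.sum_mul]
  ring

theorem dotProduct_ultraLap_mulVec (hsymm : ∀ x y, d x y = d y x) (w : X → ℝ) :
    m ⬝ᵥ (ultraLap d k m *ᵥ w) = 0 := by
  rw [← sum_sum_mul_sub_eq_zero (K := fun x y => m x * k (d x y) * m y)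
    (fun x y => by rw [hsymm]; ring) w]
  refine Finset.sum_congr rfl fun x _ => ?_
  rw [ultraLap_mulVec_apply, Finset.mul_sum]
  exact Finset.sum_congr rfl fun y _ => by ring

theorem sum_mul_ultraLap_mulVec_le {lam : ℝ} (hsymm : ∀ x y, d x y = d y x)
    (hm : ∀ x, 0 ≤ m x) (hprob : ∑ x, m x = 1) (hlam : ∀ x y, lam ≤ k (d x y))
    {w : X → ℝ} (hw : m ⬝ᵥ w = 0) :
    ∑ x, m x * w x * (ultraLap d k m *ᵥ w) x ≤ -lam * ∑ x, m x * w x ^ 2 := by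
  have hform : ∑ x, m x * w x * (ultraLap d k m *ᵥ w) x =
      -(∑ x, ∑ y, m x * k (d x y) * m y * (w x - w y) ^ 2) / 2 := by
    rw [← sum_sum_mul_mul_sub (K := fun x y => m x * k (d x y) * m y)
      (fun x y => by rw [hsymm]; ring) w]
    refine Finset.sum_congr rfl fun x _ => ?_
    rw [ultraLap_mulVec_apply, Finset.mul_sum]
    exact Finset.sum_congr rfl fun y _ => by ring
  have hvar : ∑ x, ∑ y, m x * m y * (w x - w y) ^ 2 = 2 * ∑ x, m x * w x ^ 2 := by
    rw [sum_sum_mul_mul_sub_sq, hprob, show ∑ x, m x * w x = 0 from hw]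
    ring
  have hcompare : lam * ∑ x, ∑ y, m x * m y * (w x - w y) ^ 2 ≤
      ∑ x, ∑ y, m x * k (d x y) * m y * (w x - w y) ^ 2 := by
    simp only [Finset.mul_sum]
    refine Finset.sum_le_sum fun x _ => Finset.sum_le_sum fun y _ => ?_
    have := mul_le_mul_of_nonneg_right (hlam x y)
      (mul_nonneg (mul_nonneg (hm x) (hm y)) (sq_nonneg (w x - w y)))
    linarith
  rw [hvar] at hcompare
  rw [hform]
  linarith

end UltrametricLaplacian

theorem stmt16_general {X : Type*} [Fintype X] [DecidableEq X]
    (d : X → X → ℝ)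
    (hd0 : ∀ x y, d x y = 0 ↔ x = y)
    (hsymm : ∀ x y, d x y = d y x)
    (hultra : ∀ x y z, d x z ≤ max (d x y) (d y z))
    (m : X → ℝ) (hm : ∀ x, 0 < m x) (k : ℝ → ℝ)
    (hk : ∀ a b, 0 ≤ a → a ≤ b → k b ≤ k a)
    (hprob : ∑ x, m x = 1)
    (t : ℝ) (ht : 0 ≤ t)
    (u : X → ℝ) (hu : ∑ y, u y * m y = 0) :
    (∑ x, m x * (∑ y, (NormedSpace.exp (t • ultraLap d k m)) x y * u y) ^ 2) ≤
      Real.exp (-2 * t * k (fdiam d Finset.univ)) * ∑ x, m x * u x ^ 2 := by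
  have hd_nonneg := nonneg_of_ultrametric (fun x => (hd0 x x).mpr rfl) hsymm hultra
  have hgap : ∀ w, m ⬝ᵥ w = 0 → ∑ x, m x * w x * (ultraLap d k m *ᵥ w) x ≤
      -k (fdiam d univ) * ∑ x, m x * w x ^ 2 := fun w hw =>
    sum_mul_ultraLap_mulVec_le hsymm (fun x => (hm x).le) hprob
      (fun x y => hk _ _ (hd_nonneg x y) (le_fdiam_univ d x y)) hw
  have hmean (s : ℝ) : m ⬝ᵥ (NormedSpace.exp (s • ultraLap d k m) *ᵥ u) = 0 := by
    rw [dotProduct_exp_smul_mulVec (dotProduct_ultraLap_mulVec hsymm), dotProduct_comm]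
    exact hu
  exact weighted_sq_exp_smul_mulVec_le _ m u _ ht fun s => hgap _ (hmean s)

/-- On mean-zero functions the heat semigroup contracts in
`L²(X,m)` at exponential rate given by the spectral gap `k(diam X)`. -/
theorem stmt16 {X : Type*} [Fintype X] [DecidableEq X]
    (hX : 1 < Fintype.card X)
    (d : X → X → ℝ)
    (hd0 : ∀ x y, d x y = 0 ↔ x = y)
    (hsymm : ∀ x y, d x y = d y x)
    (hultra : ∀ x y z, d x z ≤ max (d x y) (d y z))
    (m : X → ℝ) (hm : ∀ x, 0 < m x) (k : ℝ → ℝ)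
    (hk : ∀ a b, 0 ≤ a → a ≤ b → k b ≤ k a)
    (hprob : ∑ x, m x = 1)
    (t : ℝ) (ht : 0 ≤ t)
    (u : X → ℝ) (hu : ∑ y, u y * m y = 0) :
    (∑ x, m x * (∑ y, (NormedSpace.exp (t • ultraLap d k m)) x y * u y) ^ 2) ≤
      Real.exp (-2 * t * k (fdiam d Finset.univ)) * ∑ x, m x * u x ^ 2 :=
  stmt16_general d hd0 hsymm hultra m hm k hk hprob t ht u hu
end
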